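/- For n ≥ 6, the inequality (v_3 − v_1)x_1 + (v_3 − v_2)x_2 ≥ v_3² − v_1 v_2 is valid for all circuits on values v_1 < ... < v_n, with equality attained by circuits having (x_1, x_2) = (v_2, v_3) and by circuits having (x_1, x_2) = (v_3, v_1). -/
import Mathlib


/-- A circuit on `{1,...,n}`: a permutation of `Fin n` that is a single `n`-cycle. -/
def IsCircuitPerm {n : ℕ} (σ : Equiv.Perm (Fin n)) : Prop :=
  σ.IsCycle ∧ σ.support = Finset.univ

/-- A circuit point on values `v`: `x i = v (σ i)` for some single-`n`-cycle permutation `σ`. -/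
def IsCircuitPt {n : ℕ} (v : Fin n → ℝ) (x : Fin n → ℝ) : Prop :=
  ∃ σ : Equiv.Perm (Fin n), IsCircuitPerm σ ∧ ∀ i, x i = v (σ i)

/-- For `n ≥ 6`, the inequality `(v_3 − v_1)x_1 + (v_3 − v_2)x_2 ≥ v_3² − v_1 v_2`
is valid for all circuits, with equality attained by circuits having
`(x_1, x_2) = (v_2, v_3)` and by circuits having `(x_1, x_2) = (v_3, v_1)`. -/
theorem stmt_11 (n : ℕ) (hn : 6 ≤ n) (v : Fin n → ℝ)
    (hv0 : 0 ≤ v ⟨0, by omega⟩) (hv : StrictMono v) :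
    (∀ x : Fin n → ℝ, IsCircuitPt v x →
      v ⟨2, by omega⟩ ^ 2 - v ⟨0, by omega⟩ * v ⟨1, by omega⟩ ≤
        (v ⟨2, by omega⟩ - v ⟨0, by omega⟩) * x ⟨0, by omega⟩ +
        (v ⟨2, by omega⟩ - v ⟨1, by omega⟩) * x ⟨1, by omega⟩) ∧
    (∃ x : Fin n → ℝ, IsCircuitPt v x ∧
      x ⟨0, by omega⟩ = v ⟨1, by omega⟩ ∧ x ⟨1, by omega⟩ = v ⟨2, by omega⟩ ∧
      (v ⟨2, by omega⟩ - v ⟨0, by omega⟩) * x ⟨0, by omega⟩ +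
        (v ⟨2, by omega⟩ - v ⟨1, by omega⟩) * x ⟨1, by omega⟩ =
        v ⟨2, by omega⟩ ^ 2 - v ⟨0, by omega⟩ * v ⟨1, by omega⟩) ∧
    (∃ x : Fin n → ℝ, IsCircuitPt v x ∧
      x ⟨0, by omega⟩ = v ⟨2, by omega⟩ ∧ x ⟨1, by omega⟩ = v ⟨0, by omega⟩ ∧
      (v ⟨2, by omega⟩ - v ⟨0, by omega⟩) * x ⟨0, by omega⟩ +
        (v ⟨2, by omega⟩ - v ⟨1, by omega⟩) * x ⟨1, by omega⟩ =
        v ⟨2, by omega⟩ ^ 2 - v ⟨0, by omega⟩ * v ⟨1, by omega⟩) := by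
  obtain ⟨m, rfl⟩ : ∃ m, n = m + 2 := ⟨n - 2, by omega⟩
  have hm : 4 ≤ m := by omega
  set i0 : Fin (m + 2) := ⟨0, by omega⟩
  set i1 : Fin (m + 2) := ⟨1, by omega⟩
  set i2 : Fin (m + 2) := ⟨2, by omega⟩
  have hmono := hv.monotone
  have h01 : v i0 < v i1 := hv (by simp [i0, i1, Fin.lt_def])
  have h12 : v i1 < v i2 := hv (by simp [i1, i2, Fin.lt_def])
  have hr : ∀ i : Fin (m + 2), finRotate (m + 2) i = i + 1 := fun i => finRotate_succ_apply i
  have hr0 : finRotate (m + 2) i0 = i1 := by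
    rw [hr]; ext; simp [i0, i1, Fin.add_def]
  have hr1 : finRotate (m + 2) i1 = i2 := by
    rw [hr]; ext; simp [i1, i2, Fin.add_def]; omega
  refine ⟨?_, ?_, ?_⟩
  · rintro x ⟨σ, ⟨hcyc, hsupp⟩, hx⟩
    have hmove : ∀ i : Fin (m + 2), σ i ≠ i := fun i => by
      have : i ∈ σ.support := hsupp ▸ Finset.mem_univ i
      exact Equiv.Perm.mem_support.mp this
    have hne01 : σ i0 ≠ σ i1 := fun h => by
      have := σ.injective h; simp [i0, i1, Fin.ext_iff] at this
    have hnotswap : ¬ (σ i0 = i1 ∧ σ i1 = i0) := by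
      rintro ⟨h1, h2⟩
      have hswap : σ = Equiv.swap i0 (σ i0) := by
        apply hcyc.eq_swap_of_apply_apply_eq_self (hmove i0)
        rw [h1, h2]
      have : σ i2 = i2 := by
        rw [hswap, h1]
        apply Equiv.swap_apply_of_ne_of_ne <;> simp [i0, i1, i2, Fin.ext_iff]
      exact hmove i2 this
    rw [hx i0, hx i1]
    -- x0 = v (σ i0), x1 = v (σ i1)
    have hge1 : ∀ i : Fin (m + 2), i ≠ i0 → v i1 ≤ v i := fun i hi => by
      apply hmono; simp [i1, Fin.le_def]
      rcases Nat.eq_zero_or_pos i.val with h | h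
      · exact absurd (Fin.ext h) hi
      · omega
    have hge0 : ∀ i : Fin (m + 2), v i0 ≤ v i := fun i => by
      apply hmono; simp [i0, Fin.le_def]
    have hge2 : ∀ i : Fin (m + 2), i ≠ i0 → i ≠ i1 → v i2 ≤ v i := fun i h0 h1 => by
      apply hmono; simp only [i2, Fin.le_def]
      have : i.val ≠ 0 := fun h => h0 (Fin.ext h)
      have : i.val ≠ 1 := fun h => h1 (Fin.ext h)
      omega
    by_cases h : σ i0 = i1
    · have hs1 : σ i1 ≠ i0 := fun hh => hnotswap ⟨h, hh⟩
      have hx1 : v i2 ≤ v (σ i1) := hge2 _ hs1 (hmove i1)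
      rw [h]
      nlinarith [hge0 (σ i1)]
    · have hx0 : v i2 ≤ v (σ i0) := hge2 _ (hmove i0) h
      have hx1 : v i0 ≤ v (σ i1) := hge0 _
      nlinarith
  · refine ⟨fun i => v (finRotate (m + 2) i), ⟨finRotate (m + 2),
      ⟨isCycle_finRotate, support_finRotate⟩, fun i => rfl⟩, ?_, ?_, ?_⟩
    · simp only [hr0]
    · simp only [hr1]
    · simp only [hr0, hr1]; ring
  · set c : Equiv.Perm (Fin (m + 2)) := Equiv.swap i0 i1
    set σ : Equiv.Perm (Fin (m + 2)) := c * finRotate (m + 2) * c⁻¹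
    have hs0 : σ i0 = i2 := by
      simp only [σ, c, Equiv.Perm.mul_apply]
      rw [Equiv.swap_inv, Equiv.swap_apply_left, hr1, Equiv.swap_apply_of_ne_of_ne]
      <;> simp [i0, i1, i2, Fin.ext_iff]
    have hs1 : σ i1 = i0 := by
      simp only [σ, c, Equiv.Perm.mul_apply]
      rw [Equiv.swap_inv, Equiv.swap_apply_right, hr0, Equiv.swap_apply_right]
    refine ⟨fun i => v (σ i), ⟨σ, ⟨isCycle_finRotate.conj, ?_⟩, fun i => rfl⟩, ?_, ?_, ?_⟩
    · rw [Equiv.Perm.support_conj, support_finRotate]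
      exact Finset.map_univ_equiv c |>.symm ▸ rfl
    · simp only [hs0]
    · simp only [hs1]
    · simp only [hs0, hs1]; ring
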